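/- Let k be an algebraically closed field, let n ≥ 4 and let i satisfy 2 ≤ i ≤ n−2. Let S be the set of strictly upper triangular n×n matrices x over k with x_{i,i+1} = 0 and x^{n-2} ≠ 0 (note that x^{n-1} = 0 automatically for such x). Then S is the union of exactly three orbits under conjugation by the group B of upper triangular matrices of determinant 1: the subset of S where x_{i-1,i} = 0 is a single B-orbit, the subset where x_{i+1,i+2} = 0 is a single B-orbit, these two subsets are disjoint, and the remaining subset where both x_{i-1,i} ≠ 0 and x_{i+1,i+2} ≠ 0 is a single (dense) B-orbit. -/

import Mathlib

open Matrix

/-- A matrix is upper triangular. -/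
def IsUpperTri {n : ℕ} {k : Type*} [Field k] (g : Matrix (Fin n) (Fin n) k) : Prop :=
  ∀ a b : Fin n, (b : ℕ) < (a : ℕ) → g a b = 0

/-- A matrix is strictly upper triangular. -/
def IsStrictUpperTri {n : ℕ} {k : Type*} [Field k] (x : Matrix (Fin n) (Fin n) k) : Prop :=
  ∀ a b : Fin n, (b : ℕ) ≤ (a : ℕ) → x a b = 0

/-- The orbit of `e` under conjugation by the group `B` of upper triangular matrices of
determinant `1`. -/
def Borbit {n : ℕ} {k : Type*} [Field k] (e : Matrix (Fin n) (Fin n) k) :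
    Set (Matrix (Fin n) (Fin n) k) :=
  { x | ∃ g : Matrix (Fin n) (Fin n) k, IsUpperTri g ∧ g.det = 1 ∧ x = g * e * g⁻¹ }

/-!
Write `s j = x_{j,j+1}` (0-based) for the superdiagonal of a strictly upper triangular `x`, so
that `x ∈ S` has the gap `s (i - 1) = 0`. Every entry of `x ^ (n - 2)` other than the corner
`(0, n - 1)` is a product of superdiagonal entries through the gap, and the corner is
`(∏_{j < i - 2} s j) * (x ^ 2)_{i-2,i+1} * ∏_{j > i} s j`, a path of `n - 2` steps having to
jump over the gap once. Hence on `S` all `s j` with `j ∉ {i - 2, i - 1, i}` are nonzero, and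
`s (i - 2)`, `s i` do not vanish together. Conjugation by `B` multiplies each `s j` by a nonzero
diagonal factor, so which of `s (i - 2)`, `s i` vanishes is a `B`-invariant.

Conversely, given `x` in one of the three pieces, let `m` be the last zero of the superdiagonal
(`m = i` if `s i = 0`, otherwise `m = i - 1`). The vectors `x ^ p e_{n-1}` make up a Jordan chain
of length `n - 1` which, with one vector `w ∈ span (e_0, …, e_m)` found by back substitution,
form the columns of an upper triangular matrix with nonzero diagonal conjugating `x` to a fixed
normal form `chainRep`. An `n`-th root of its determinant rescales it into `B`.
-/

section

open Finset

variable {k : Type*} [Field k] {n : ℕ}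

namespace Matrix

/-- Entries indexed by natural numbers, with junk value `0` outside the matrix. -/
def natEntry (x : Matrix (Fin n) (Fin n) k) (a b : ℕ) : k :=
  if h : a < n ∧ b < n then x ⟨a, h.1⟩ ⟨b, h.2⟩ else 0

def superdiag (x : Matrix (Fin n) (Fin n) k) (j : ℕ) : k := x.natEntry j (j + 1)

theorem natEntry_of_lt (x : Matrix (Fin n) (Fin n) k) {a b : ℕ} (ha : a < n) (hb : b < n) :
    x.natEntry a b = x ⟨a, ha⟩ ⟨b, hb⟩ :=
  dif_pos ⟨ha, hb⟩

theorem natEntry_coe (x : Matrix (Fin n) (Fin n) k) (a b : Fin n) : x.natEntry a b = x a b :=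
  natEntry_of_lt x a.2 b.2

theorem natEntry_zero (a b : ℕ) : (0 : Matrix (Fin n) (Fin n) k).natEntry a b = 0 := by
  unfold natEntry; split <;> rfl

theorem apply_mk_eq_superdiag {x : Matrix (Fin n) (Fin n) k} {a b : ℕ} (ha : a < n)
    (hb : b < n) (hab : b = a + 1) : x ⟨a, ha⟩ ⟨b, hb⟩ = x.superdiag a := by
  subst hab
  exact (natEntry_of_lt x ha hb).symm

theorem natEntry_mul (x y : Matrix (Fin n) (Fin n) k) {a b : ℕ} (ha : a < n) (hb : b < n) :
    (x * y).natEntry a b = ∑ c ∈ range n, x.natEntry a c * y.natEntry c b := by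
  rw [natEntry_of_lt _ ha hb, mul_apply, ← Fin.sum_univ_eq_sum_range]
  exact sum_congr rfl fun c _ => by rw [natEntry_of_lt x ha c.2, natEntry_of_lt y c.2 hb]

end Matrix

theorem IsUpperTri.natEntry_eq_zero {g : Matrix (Fin n) (Fin n) k} (hg : IsUpperTri g)
    {a b : ℕ} (h : b < a) : g.natEntry a b = 0 := by
  unfold natEntry; split
  · exact hg _ _ h
  · rfl

namespace IsStrictUpperTri

variable {x : Matrix (Fin n) (Fin n) k} (hx : IsStrictUpperTri x)
include hx

theorem natEntry_eq_zero {a b : ℕ} (h : b ≤ a) : x.natEntry a b = 0 := by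
  unfold natEntry; split
  · exact hx _ _ h
  · rfl

theorem natEntry_pow_eq_zero (m : ℕ) {a b : ℕ} (h : b < a + m) : (x ^ m).natEntry a b = 0 := by
  induction m generalizing b with
  | zero =>
    unfold natEntry; split
    · exact one_apply_ne (by simp only [ne_eq, Fin.mk.injEq]; omega)
    · rfl
  | succ m ih =>
    by_cases hab : a < n ∧ b < n
    · rw [pow_succ, natEntry_mul _ _ hab.1 hab.2]
      refine sum_eq_zero fun c _ => ?_
      rcases lt_or_ge c (a + m) with hc | hc
      · rw [ih hc, zero_mul]
      · rw [hx.natEntry_eq_zero (by omega), mul_zero]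
    · exact dif_neg hab

theorem natEntry_pow_add_self (m : ℕ) {a : ℕ} (h : a + m < n) :
    (x ^ m).natEntry a (a + m) = ∏ c ∈ range m, x.superdiag (a + c) := by
  induction m with
  | zero =>
    rw [pow_zero, add_zero, natEntry_of_lt _ (by omega) (by omega), one_apply_eq, prod_range_zero]
  | succ m ih =>
    rw [pow_succ, natEntry_mul _ _ (by omega) h, sum_eq_single (a + m), ih (by omega),
      prod_range_succ, superdiag, add_assoc]
    · intro c _ hc
      rcases lt_or_ge c (a + m) with h1 | h1
      · rw [hx.natEntry_pow_eq_zero m h1, zero_mul]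
      · rw [hx.natEntry_eq_zero (by omega), mul_zero]
    · exact fun hm => absurd (mem_range.mpr (by omega)) hm

/-- On the first diagonal above the `(p + q)`-th one, a path of `p + q` steps makes exactly one
double step, either within the first `p` steps or within the last `q`. -/
theorem natEntry_pow_add_offDiag (p q r : ℕ) (h : r + p + q + 1 < n) :
    (x ^ (p + q)).natEntry r (r + p + q + 1) =
      (x ^ p).natEntry r (r + p) * (x ^ q).natEntry (r + p) (r + p + q + 1) +
        (x ^ p).natEntry r (r + p + 1) * (x ^ q).natEntry (r + p + 1) (r + p + q + 1) := by
  rw [pow_add, natEntry_mul _ _ (by omega) h, ← sum_subset (s₁ := {r + p, r + p + 1}),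
    sum_pair (by omega)]
  · intro c hc
    simp only [mem_insert, mem_singleton] at hc
    exact mem_range.mpr (by omega)
  · intro c _ hc
    simp only [mem_insert, mem_singleton, not_or] at hc
    rcases lt_or_ge c (r + p) with h1 | h1
    · rw [hx.natEntry_pow_eq_zero p h1, zero_mul]
    · rw [hx.natEntry_pow_eq_zero q (by omega), mul_zero]

section gap

variable {g : ℕ} (hgap : x.superdiag g = 0)
include hgap

theorem natEntry_pow_add_offDiag_eq_prod_mul {b q r : ℕ} (hb : r + b < g) (hq : g ≤ r + b + q)
    (h : r + b + q + 1 < n) :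
    (x ^ (b + q)).natEntry r (r + b + q + 1) =
      (∏ c ∈ range b, x.superdiag (r + c)) * (x ^ q).natEntry (r + b) (r + b + q + 1) := by
  have hzero : (x ^ q).natEntry (r + b + 1) (r + b + 1 + q) = 0 := by
    rw [hx.natEntry_pow_add_self q (by omega)]
    exact prod_eq_zero (mem_range.mpr (show g - (r + b + 1) < q by omega))
      (by rwa [show r + b + 1 + (g - (r + b + 1)) = g by omega])
  rw [hx.natEntry_pow_add_offDiag b q r h, hx.natEntry_pow_add_self b (by omega),
    show r + b + q + 1 = r + b + 1 + q by omega, hzero, mul_zero, add_zero]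

theorem natEntry_pow_add_offDiag_eq_mul_prod {p q r : ℕ} (hp : r ≤ g) (hg : g < r + p)
    (h : r + p + q + 1 < n) :
    (x ^ (p + q)).natEntry r (r + p + q + 1) =
      (x ^ p).natEntry r (r + p + 1) * ∏ c ∈ range q, x.superdiag (r + p + 1 + c) := by
  have hzero : (x ^ p).natEntry r (r + p) = 0 := by
    rw [hx.natEntry_pow_add_self p (by omega)]
    exact prod_eq_zero (mem_range.mpr (show g - r < p by omega))
      (by rwa [show r + (g - r) = g by omega])
  rw [hx.natEntry_pow_add_offDiag p q r h, hzero, zero_mul, zero_add,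
    show r + p + q + 1 = r + p + 1 + q by omega, hx.natEntry_pow_add_self q (by omega)]

theorem corner_eq_prod_mul {b : ℕ} (hb : b < g) (hg : g + 2 ≤ n) :
    (x ^ (n - 2)).natEntry 0 (n - 1) =
      (∏ c ∈ range b, x.superdiag c) * (x ^ (n - 2 - b)).natEntry b (n - 1) := by
  have h := hx.natEntry_pow_add_offDiag_eq_prod_mul hgap (b := b) (r := 0) (q := n - 2 - b)
    (by omega) (by omega) (by omega)
  simp only [zero_add] at h
  rwa [show b + (n - 2 - b) = n - 2 by omega, show n - 2 + 1 = n - 1 by omega] at h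

theorem corner_eq_mul_prod {p : ℕ} (hp : g < p) (hpn : p + 2 ≤ n) :
    (x ^ (n - 2)).natEntry 0 (n - 1) =
      (x ^ p).natEntry 0 (p + 1) * ∏ c ∈ range (n - 2 - p), x.superdiag (p + 1 + c) := by
  have h := hx.natEntry_pow_add_offDiag_eq_mul_prod hgap (p := p) (r := 0) (q := n - 2 - p)
    (by omega) (by omega) (by omega)
  simp only [zero_add] at h
  rwa [show p + (n - 2 - p) = n - 2 by omega, show n - 2 + 1 = n - 1 by omega] at h

/-- The corner entry of `x ^ (n - 2)` sees the gap at `g` only through the double steps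
`(g - 1, g + 1)` and `(g, g + 2)`, both recorded in `(x ^ 2)_{g - 1, g + 2}`. -/
theorem corner_eq_prod_mul_sq_mul (hg1 : 1 ≤ g) (hg : g + 3 ≤ n) :
    (x ^ (n - 2)).natEntry 0 (n - 1) =
      (∏ c ∈ range (g - 1), x.superdiag c) * (x ^ 2).natEntry (g - 1) (g + 2) *
        ∏ c ∈ range (n - 3 - g), x.superdiag (g + 2 + c) := by
  have h := hx.natEntry_pow_add_offDiag_eq_mul_prod hgap (p := 2) (q := n - 3 - g) (r := g - 1)
    (by omega) (by omega) (by omega)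
  rw [show 2 + (n - 3 - g) = n - 2 - (g - 1) by omega,
    show g - 1 + 2 + (n - 3 - g) + 1 = n - 1 by omega, show g - 1 + 2 + 1 = g + 2 by omega]
    at h
  rw [hx.corner_eq_prod_mul hgap (show g - 1 < g by omega) (by omega), h, mul_assoc]

theorem superdiag_ne_zero_of_lt_gap (hcorner : (x ^ (n - 2)).natEntry 0 (n - 1) ≠ 0)
    (hg : g + 2 ≤ n) {c : ℕ} (hc : c + 1 < g) : x.superdiag c ≠ 0 := by
  rw [hx.corner_eq_prod_mul hgap (show c + 1 < g from hc) hg] at hcorner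
  exact prod_ne_zero_iff.mp (left_ne_zero_of_mul hcorner) c (mem_range.mpr (by omega))

theorem superdiag_ne_zero_of_gap_lt (hcorner : (x ^ (n - 2)).natEntry 0 (n - 1) ≠ 0)
    {c : ℕ} (hc : g + 1 < c) (hcn : c + 2 ≤ n) : x.superdiag c ≠ 0 := by
  rw [hx.corner_eq_mul_prod hgap (show g < g + 1 by omega) (by omega)] at hcorner
  have := prod_ne_zero_iff.mp (right_ne_zero_of_mul hcorner) (c - (g + 2))
    (mem_range.mpr (by omega))
  rwa [show g + 1 + 1 + (c - (g + 2)) = c by omega] at this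

theorem natEntry_pow_ne_zero_of_lt_gap (hcorner : (x ^ (n - 2)).natEntry 0 (n - 1) ≠ 0)
    (hg : g + 2 ≤ n) {b : ℕ} (hb : b < g) : (x ^ (n - 2 - b)).natEntry b (n - 1) ≠ 0 := by
  rw [hx.corner_eq_prod_mul hgap hb hg] at hcorner
  exact right_ne_zero_of_mul hcorner

/-- All entries of `x ^ (n - 2)` but the corner are products of superdiagonal entries that
include the gap. -/
theorem pow_sub_two_ne_zero_iff (hg1 : 1 ≤ g) (hg : g + 3 ≤ n) :
    x ^ (n - 2) ≠ 0 ↔ (x ^ (n - 2)).natEntry 0 (n - 1) ≠ 0 := by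
  refine ⟨fun hne hcorner => hne ?_, fun hcorner hzero => ?_⟩
  swap
  · rw [hzero, natEntry_zero] at hcorner
    exact hcorner rfl
  ext a b
  rw [← natEntry_coe (x ^ (n - 2)), Matrix.zero_apply]
  rcases lt_or_ge (b : ℕ) (a + (n - 2)) with hab | hab
  · exact hx.natEntry_pow_eq_zero _ hab
  by_cases ha : (a : ℕ) = 0 ∧ (b : ℕ) = n - 1
  · rwa [ha.1, ha.2]
  rw [show (b : ℕ) = a + (n - 2) by omega, hx.natEntry_pow_add_self _ (by omega)]
  exact prod_eq_zero (mem_range.mpr (show g - a < n - 2 by omega))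
    (by rwa [show (a : ℕ) + (g - a) = g by omega])

end gap

end IsStrictUpperTri

/-- Row `r < m - 1` of `x w = z` determines `w (r + 1)` since `x_{r,r+1} ≠ 0`; row `m - 1`
involves `w m` alone. -/
theorem IsStrictUpperTri.exists_backSubstitution {x : Matrix (Fin n) (Fin n) k}
    (hx : IsStrictUpperTri x) {m : ℕ} (hm : 1 ≤ m) (hmn : m < n)
    (hsup : ∀ r, r + 1 < m → x.superdiag r ≠ 0) {z : ℕ → k}
    (hz : ∀ r, m ≤ r → z r = 0)
    {top : k} (htop : x.superdiag (m - 1) * top = z (m - 1)) :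
    ∃ w : ℕ → k, w m = top ∧ (∀ r, m < r → w r = 0) ∧
      ∀ r, ∑ c ∈ range n, x.natEntry r c * w c = z r := by
  suffices h : ∀ d, d < m → ∃ w : ℕ → k, w m = top ∧ (∀ r, m < r → w r = 0) ∧
      ∀ r, m - 1 - d ≤ r → ∑ c ∈ range n, x.natEntry r c * w c = z r by
    obtain ⟨w, hwm, hw, hrow⟩ := h (m - 1) (by omega)
    exact ⟨w, hwm, hw, fun r => hrow r (by omega)⟩
  intro d
  induction d with
  | zero =>
    intro _
    refine ⟨fun c => if c = m then top else 0, if_pos rfl, fun r hr => if_neg (by omega),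
      fun r hr => ?_⟩
    simp only [mul_ite, mul_zero, sum_ite_eq', mem_range, if_pos hmn]
    rcases eq_or_lt_of_le hr with hr | hr
    · rw [← hr, Nat.sub_zero, ← htop, superdiag, Nat.sub_add_cancel hm]
    · rw [hx.natEntry_eq_zero (by omega), zero_mul, hz r (by omega)]
  | succ d ih =>
    intro hd
    obtain ⟨w, hwm, hw, hrow⟩ := ih (by omega)
    set r₀ := m - 2 - d
    set α := (z r₀ - ∑ c ∈ range n, x.natEntry r₀ c * w c) / x.superdiag r₀
    have hrow' : ∀ r, ∑ c ∈ range n, x.natEntry r c * (w c + if c = r₀ + 1 then α else 0) =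
        ∑ c ∈ range n, x.natEntry r c * w c + x.natEntry r (r₀ + 1) * α := fun r => by
      simp only [mul_add, sum_add_distrib, mul_ite, mul_zero, sum_ite_eq', mem_range,
        if_pos (show r₀ + 1 < n by omega)]
    refine ⟨fun c => w c + if c = r₀ + 1 then α else 0, by simp [hwm, r₀]; omega,
      fun r hr => by simp [hw r hr, r₀]; omega, fun r hr => ?_⟩
    rw [hrow']
    rcases eq_or_lt_of_le (show r₀ ≤ r by omega) with hr | hr
    · subst hr
      have hne : x.superdiag r₀ ≠ 0 := hsup r₀ (by omega)
      rw [← superdiag, mul_div_cancel₀ _ hne]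
      ring
    · rw [hx.natEntry_eq_zero (show r₀ + 1 ≤ r by omega), zero_mul, add_zero,
        hrow r (by omega)]

theorem IsStrictUpperTri.natEntry_pow_sub_one_eq_zero {x : Matrix (Fin n) (Fin n) k}
    (hx : IsStrictUpperTri x) {g : ℕ} (hgap : x.superdiag g = 0) (hg : g + 2 ≤ n) (a : ℕ) :
    (x ^ (n - 1)).natEntry a (n - 1) = 0 := by
  rcases Nat.eq_zero_or_pos a with rfl | ha
  · have h := hx.natEntry_pow_add_self (n - 1) (a := 0) (by omega)
    rw [zero_add] at h
    rw [h]
    exact prod_eq_zero (mem_range.mpr (show g < n - 1 by omega)) (by rwa [zero_add])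
  · exact hx.natEntry_pow_eq_zero _ (by omega)

/-- On the standard basis: `e_{n-1} ↦ ⋯ ↦ e_{m+1} ↦ e_{m-1} ↦ ⋯ ↦ e_0 ↦ 0` and
`e_m ↦ t e_{m-1}`. -/
def chainRep (n m : ℕ) (t : k) : Matrix (Fin n) (Fin n) k :=
  Matrix.of fun r b => if (r : ℕ) + 1 = m ∧ (b : ℕ) = m + 1 then 1
    else if (b : ℕ) = r + 1 ∧ (r : ℕ) ≠ m then (if (b : ℕ) = m then t else 1) else 0

section chainRep

variable {m : ℕ} {t : k}

theorem natEntry_chainRep {r b : ℕ} (hr : r < n) (hb : b < n) :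
    (chainRep n m t).natEntry r b = if r + 1 = m ∧ b = m + 1 then 1
      else if b = r + 1 ∧ r ≠ m then (if b = m then t else 1) else 0 :=
  natEntry_of_lt _ hr hb

theorem isStrictUpperTri_chainRep : IsStrictUpperTri (chainRep n m t) := by
  intro r b h
  simp only [chainRep, of_apply]
  split_ifs <;> first | rfl | omega

theorem superdiag_chainRep {j : ℕ} (hj : j + 1 < n) :
    (chainRep n m t).superdiag j = if j = m then 0 else if j + 1 = m then t else 1 := by
  rw [superdiag, natEntry_chainRep (by omega) hj]
  split_ifs <;> first | rfl | omega

theorem natEntry_chainRep_add_two {j : ℕ} (hj : j + 2 < n) :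
    (chainRep n m t).natEntry j (j + 2) = if j + 1 = m then 1 else 0 := by
  rw [natEntry_chainRep (by omega) hj]
  split_ifs <;> first | rfl | omega

theorem natEntry_mul_chainRep (hm : 1 ≤ m) (h : Matrix (Fin n) (Fin n) k) {a b : ℕ}
    (ha : a < n) (hb : b < n) :
    (h * chainRep n m t).natEntry a b = (if b = 0 then 0 else if b = m then t else 1) *
      h.natEntry a (if b = m + 1 then m - 1 else b - 1) := by
  rw [natEntry_mul _ _ ha hb, sum_eq_single (if b = m + 1 then m - 1 else b - 1)]
  · rw [natEntry_chainRep (by split_ifs <;> omega) hb, mul_comm]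
    congr 1
    split_ifs <;> first | rfl | omega
  · intro c hc hne
    rw [natEntry_chainRep (mem_range.mp hc) hb]
    split_ifs at hne ⊢ <;> first | omega | simp
  · exact fun hnot => absurd (mem_range.mpr (by split_ifs <;> omega)) hnot

end chainRep

def chainExp (n m b : ℕ) : ℕ := if m < b then n - 1 - b else n - 2 - b

/-- The Jordan chain of `e_{n-1}` under `x`, with position `m` left out for `w`. -/
def chainBasis (x : Matrix (Fin n) (Fin n) k) (m : ℕ) (w : ℕ → k) :
    Matrix (Fin n) (Fin n) k :=
  Matrix.of fun r b => if (b : ℕ) = m then w r else (x ^ chainExp n m b).natEntry r (n - 1)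

section chainBasis

variable {x : Matrix (Fin n) (Fin n) k} {m : ℕ} {w : ℕ → k}

theorem natEntry_chainBasis {r b : ℕ} (hr : r < n) (hb : b < n) :
    (chainBasis x m w).natEntry r b =
      if b = m then w r else (x ^ chainExp n m b).natEntry r (n - 1) :=
  natEntry_of_lt _ hr hb

variable (hx : IsStrictUpperTri x) (hgap : x.superdiag m = 0) (hmn : m + 2 ≤ n)
include hx hgap hmn

theorem isUpperTri_chainBasis (hw : ∀ r, m < r → w r = 0) : IsUpperTri (chainBasis x m w) := by
  intro a b hba
  simp only [chainBasis, of_apply]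
  split_ifs with hbm
  · exact hw _ (by omega)
  unfold chainExp
  split_ifs with hmb
  · exact hx.natEntry_pow_eq_zero _ (by omega)
  rcases lt_or_ge ((b : ℕ) + 1) a with h | h
  · exact hx.natEntry_pow_eq_zero _ (by omega)
  have hd := hx.natEntry_pow_add_self (n - 2 - b) (a := b + 1) (by omega)
  rw [show (b : ℕ) + 1 + (n - 2 - b) = n - 1 by omega] at hd
  rw [show (a : ℕ) = b + 1 by omega, hd]
  exact prod_eq_zero (mem_range.mpr (show m - (b + 1) < n - 2 - b by omega))
    (by rwa [show (b : ℕ) + 1 + (m - (b + 1)) = m by omega])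

theorem chainBasis_diag_ne_zero (hcorner : (x ^ (n - 2)).natEntry 0 (n - 1) ≠ 0)
    (hhigh : ∀ c, m < c → c + 2 ≤ n → x.superdiag c ≠ 0) (hwm : w m ≠ 0) (b : Fin n) :
    chainBasis x m w b b ≠ 0 := by
  simp only [chainBasis, of_apply]
  split_ifs with hbm
  · rwa [hbm]
  unfold chainExp
  split_ifs with hmb
  · have hd := hx.natEntry_pow_add_self (n - 1 - b) (a := b) (by omega)
    rw [show (b : ℕ) + (n - 1 - b) = n - 1 by omega] at hd
    rw [hd, prod_ne_zero_iff]
    exact fun c hc => hhigh _ (by omega) (by have := mem_range.mp hc; omega)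
  · exact hx.natEntry_pow_ne_zero_of_lt_gap hgap hcorner hmn (by omega)

theorem mul_chainBasis (hm : 1 ≤ m) {t : k}
    (hxw : ∀ r, ∑ c ∈ range n, x.natEntry r c * w c =
      t * (x ^ (n - 1 - m)).natEntry r (n - 1)) :
    x * chainBasis x m w = chainBasis x m w * chainRep n m t := by
  ext a b
  have hsrc : (if (b : ℕ) = m + 1 then m - 1 else b - 1) < n := by split_ifs <;> omega
  rw [← natEntry_coe (x * _), ← natEntry_coe (_ * chainRep n m t), natEntry_mul _ _ a.2 b.2,
    natEntry_mul_chainRep hm _ a.2 b.2, natEntry_chainBasis a.2 hsrc,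
    sum_congr rfl fun c hc => by rw [natEntry_chainBasis (mem_range.mp hc) b.2]]
  by_cases hbm : (b : ℕ) = m
  · simp only [hbm, if_true, if_neg (show m ≠ 0 by omega), if_neg (show m ≠ m + 1 by omega),
      if_neg (show m - 1 ≠ m by omega), hxw]
    unfold chainExp
    rw [if_neg (by omega), show n - 2 - (m - 1) = n - 1 - m by omega]
  have hstep : ∑ c ∈ range n, x.natEntry a c * (x ^ chainExp n m b).natEntry c (n - 1) =
      (x ^ (chainExp n m b + 1)).natEntry a (n - 1) := by
    rw [pow_succ', natEntry_mul _ _ a.2 (by omega)]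
  simp only [if_neg hbm, hstep]
  by_cases hb0 : (b : ℕ) = 0
  · rw [if_pos hb0, zero_mul,
      show chainExp n m b + 1 = n - 1 by unfold chainExp; split_ifs <;> omega]
    exact hx.natEntry_pow_sub_one_eq_zero hgap hmn _
  · rw [if_neg hb0, one_mul, if_neg (by split_ifs <;> omega)]
    congr 2
    unfold chainExp
    split_ifs <;> omega

end chainBasis

theorem IsUpperTri.isUpperTriangular {g : Matrix (Fin n) (Fin n) k} (hg : IsUpperTri g) :
    g.IsUpperTriangular :=
  fun a b h => hg a b h

theorem IsUpperTri.inv {g : Matrix (Fin n) (Fin n) k} (hg : IsUpperTri g) (hdet : IsUnit g.det) :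
    IsUpperTri g⁻¹ := by
  let := invertibleOfIsUnitDet g hdet
  exact fun a b h => blockTriangular_inv_of_blockTriangular hg.isUpperTriangular h

theorem IsUpperTri.diag_ne_zero {g : Matrix (Fin n) (Fin n) k} (hg : IsUpperTri g)
    (hdet : g.det ≠ 0) (a : Fin n) : g a a ≠ 0 := by
  rw [det_of_isUpperTriangular hg.isUpperTriangular] at hdet
  exact prod_ne_zero_iff.mp hdet a (mem_univ a)

/-- Rescaling a triangular intertwiner to determinant `1` needs an `n`-th root of its
determinant. -/
theorem mem_Borbit_of_mul_eq_mul [IsAlgClosed k] {x e h : Matrix (Fin n) (Fin n) k}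
    (hn : 0 < n) (hh : IsUpperTri h) (hdiag : ∀ b, h b b ≠ 0) (heq : x * h = h * e) :
    x ∈ Borbit e := by
  have hdet : h.det ≠ 0 := by
    rw [det_of_isUpperTriangular hh.isUpperTriangular]
    exact prod_ne_zero_iff.mpr fun b _ => hdiag b
  obtain ⟨c, hc⟩ := IsAlgClosed.exists_pow_nat_eq h.det⁻¹ hn
  have hgdet : (c • h).det = 1 := by
    rw [det_smul, Fintype.card_fin, hc, inv_mul_cancel₀ hdet]
  refine ⟨c • h, fun a b hab => by simp [hh a b hab], hgdet, ?_⟩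
  have hgeq : x * (c • h) = c • h * e := by rw [Matrix.mul_smul, heq, Matrix.smul_mul]
  rw [← hgeq, mul_nonsing_inv_cancel_right _ _ (by rw [hgdet]; exact isUnit_one)]

namespace IsStrictUpperTri

variable {x g : Matrix (Fin n) (Fin n) k} (hx : IsStrictUpperTri x) (hg : IsUpperTri g)
include hx hg

theorem upperTri_mul : IsStrictUpperTri (g * x) := by
  intro a b hba
  rw [mul_apply]
  refine sum_eq_zero fun c _ => ?_
  rcases lt_or_ge (c : ℕ) a with h | h
  · rw [hg _ _ h, zero_mul]
  · rw [hx _ _ (by omega), mul_zero]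

theorem mul_upperTri : IsStrictUpperTri (x * g) := by
  intro a b hba
  rw [mul_apply]
  refine sum_eq_zero fun c _ => ?_
  rcases le_or_gt (c : ℕ) a with h | h
  · rw [hx _ _ h, zero_mul]
  · rw [hg _ _ (by omega), mul_zero]

theorem superdiag_upperTri_mul {j : ℕ} (hj : j + 1 < n) :
    (g * x).superdiag j = g.natEntry j j * x.superdiag j := by
  rw [superdiag, natEntry_mul _ _ (by omega) hj, sum_eq_single j, superdiag]
  · intro c _ hc
    rcases lt_or_ge c j with h | h
    · rw [hg.natEntry_eq_zero h, zero_mul]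
    · rw [hx.natEntry_eq_zero (by omega), mul_zero]
  · exact fun h => absurd (mem_range.mpr (by omega)) h

theorem superdiag_mul_upperTri {j : ℕ} (hj : j + 1 < n) :
    (x * g).superdiag j = x.superdiag j * g.natEntry (j + 1) (j + 1) := by
  rw [superdiag, natEntry_mul _ _ (by omega) hj, sum_eq_single (j + 1), superdiag]
  · intro c _ hc
    rcases le_or_gt c j with h | h
    · rw [hx.natEntry_eq_zero h, zero_mul]
    · rw [hg.natEntry_eq_zero (by omega), mul_zero]
  · exact fun h => absurd (mem_range.mpr hj) h

end IsStrictUpperTri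

section Borbit

variable {e y : Matrix (Fin n) (Fin n) k} (hy : y ∈ Borbit e)
include hy

theorem isStrictUpperTri_of_mem_Borbit (he : IsStrictUpperTri e) : IsStrictUpperTri y := by
  obtain ⟨g, hg, hdet, rfl⟩ := hy
  exact (he.upperTri_mul hg).mul_upperTri (hg.inv (by simp [hdet]))

theorem pow_eq_zero_iff_of_mem_Borbit (p : ℕ) : y ^ p = 0 ↔ e ^ p = 0 := by
  obtain ⟨g, -, hdet, rfl⟩ := hy
  set u := nonsingInvUnit g (by simp [hdet])
  have hconj : g * e * g⁻¹ = u * e * (↑u⁻¹ : Matrix (Fin n) (Fin n) k) := rfl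
  rw [hconj, Units.conj_pow, Units.mul_left_eq_zero, Units.mul_right_eq_zero]

theorem superdiag_eq_zero_iff_of_mem_Borbit (he : IsStrictUpperTri e) (j : ℕ) :
    y.superdiag j = 0 ↔ e.superdiag j = 0 := by
  by_cases hj : j + 1 < n
  · obtain ⟨g, hg, hdet, rfl⟩ := hy
    have hu : IsUnit g.det := by simp [hdet]
    rw [(he.upperTri_mul hg).superdiag_mul_upperTri (hg.inv hu) hj,
      he.superdiag_upperTri_mul hg hj, natEntry_of_lt g (by omega) (by omega),
      natEntry_of_lt g⁻¹ hj hj]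
    simp only [mul_eq_zero, hg.diag_ne_zero hu.ne_zero,
      (hg.inv hu).diag_ne_zero (isUnit_nonsing_inv_det g hu).ne_zero, false_or, or_false]
  · simp only [superdiag, natEntry, hj, and_false, dite_false]

end Borbit

theorem IsStrictUpperTri.natEntry_sq {x : Matrix (Fin n) (Fin n) k} (hx : IsStrictUpperTri x)
    {a : ℕ} (h : a + 3 < n) : (x ^ 2).natEntry a (a + 3) =
      x.superdiag a * x.natEntry (a + 1) (a + 3) + x.natEntry a (a + 2) * x.superdiag (a + 2) := by
  have := hx.natEntry_pow_add_offDiag 1 1 a (by omega)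
  simp only [pow_one, Nat.reduceAdd] at this
  rw [this, superdiag, superdiag, show a + 1 + 1 + 1 = a + 3 by omega,
    show a + 1 + 1 = a + 2 by omega]

section construction

variable [IsAlgClosed k] {x : Matrix (Fin n) (Fin n) k} (hx : IsStrictUpperTri x) {m : ℕ}
  (hm : 1 ≤ m) (hgap : x.superdiag m = 0) (hcorner : (x ^ (n - 2)).natEntry 0 (n - 1) ≠ 0)
include hx hm hgap hcorner

/-- The extra basis vector `w` is a kernel vector of `x`. -/
theorem mem_Borbit_chainRep_zero (hmn : m + 2 ≤ n) (hpred : x.superdiag (m - 1) = 0) :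
    x ∈ Borbit (chainRep n m 0) := by
  obtain ⟨w, hwm, hw, hxw⟩ := hx.exists_backSubstitution hm (by omega)
    (fun r hr => hx.superdiag_ne_zero_of_lt_gap hgap hcorner hmn hr) (z := 0)
    (fun _ _ => rfl) (top := 1) (by rw [hpred, zero_mul, Pi.zero_apply])
  have hhigh (c : ℕ) (hc : m < c) (hcn : c + 2 ≤ n) : x.superdiag c ≠ 0 :=
    hx.superdiag_ne_zero_of_gap_lt hpred hcorner (by omega) hcn
  refine mem_Borbit_of_mul_eq_mul (by omega) (isUpperTri_chainBasis hx hgap hmn hw)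
    (chainBasis_diag_ne_zero hx hgap hmn hcorner hhigh (by rw [hwm]; exact one_ne_zero))
    (mul_chainBasis hx hgap hmn hm fun r => ?_)
  rw [hxw, zero_mul, Pi.zero_apply]

/-- The extra basis vector `w` solves `x w = x ^ (n - 1 - m) e_{n-1}`. -/
theorem mem_Borbit_chainRep_one (hmn : m + 3 ≤ n) (hpred : x.superdiag (m - 1) ≠ 0)
    (hsucc : x.superdiag (m + 1) ≠ 0) : x ∈ Borbit (chainRep n m 1) := by
  set z : ℕ → k := fun r => (x ^ (n - 1 - m)).natEntry r (n - 1)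
  have hz (r : ℕ) (hr : m ≤ r) : z r = 0 := by
    rcases eq_or_lt_of_le hr with hr | hr
    · have hd := hx.natEntry_pow_add_self (n - 1 - m) (a := m) (by omega)
      rw [show m + (n - 1 - m) = n - 1 by omega] at hd
      rw [← hr]
      exact hd.trans (prod_eq_zero (mem_range.mpr (show 0 < n - 1 - m by omega))
        (by rwa [add_zero]))
    · exact hx.natEntry_pow_eq_zero (n - 1 - m) (by omega)
  have hzpred : z (m - 1) ≠ 0 := by
    have := hx.natEntry_pow_ne_zero_of_lt_gap hgap hcorner (by omega) (show m - 1 < m by omega)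
    rwa [show n - 2 - (m - 1) = n - 1 - m by omega] at this
  obtain ⟨w, hwm, hw, hxw⟩ := hx.exists_backSubstitution hm (by omega)
    (fun r hr => hx.superdiag_ne_zero_of_lt_gap hgap hcorner (by omega) hr) hz
    (top := z (m - 1) / x.superdiag (m - 1)) (mul_div_cancel₀ _ hpred)
  have hhigh (c : ℕ) (hc : m < c) (hcn : c + 2 ≤ n) : x.superdiag c ≠ 0 := by
    rcases eq_or_lt_of_le (show m + 1 ≤ c from hc) with rfl | hc
    · exact hsucc
    · exact hx.superdiag_ne_zero_of_gap_lt hgap hcorner hc hcn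
  refine mem_Borbit_of_mul_eq_mul (by omega) (isUpperTri_chainBasis hx hgap (by omega) hw)
    (chainBasis_diag_ne_zero hx hgap (by omega) hcorner hhigh
      (by rw [hwm]; exact div_ne_zero hzpred hpred))
    (mul_chainBasis hx hgap (by omega) hm fun r => ?_)
  rw [hxw, one_mul]

end construction

/-- The paper's `O_subreg ∩ u_{α_i}`; its (1-based) entry `x_{i,i+1}` is `x.superdiag (i - 1)`. -/
def subregularMeetNilradical (n i : ℕ) : Set (Matrix (Fin n) (Fin n) k) :=
  {x | IsStrictUpperTri x ∧ x.superdiag (i - 1) = 0 ∧ x ^ (n - 2) ≠ 0}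

section subregularMeetNilradical

variable {i : ℕ}

theorem mem_subregularMeetNilradical_of_mem_Borbit {e y : Matrix (Fin n) (Fin n) k}
    (he : e ∈ subregularMeetNilradical n i) (hy : y ∈ Borbit e) :
    y ∈ subregularMeetNilradical n i :=
  ⟨isStrictUpperTri_of_mem_Borbit hy he.1,
    (superdiag_eq_zero_iff_of_mem_Borbit hy he.1 _).mpr he.2.1,
    fun h => he.2.2 ((pow_eq_zero_iff_of_mem_Borbit hy _).mp h)⟩

variable (hi1 : 2 ≤ i) (hi2 : i + 2 ≤ n)
include hi1 hi2

theorem natEntry_pow_sub_two_ne_zero_of_mem {x : Matrix (Fin n) (Fin n) k}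
    (hx : x ∈ subregularMeetNilradical n i) : (x ^ (n - 2)).natEntry 0 (n - 1) ≠ 0 :=
  (hx.1.pow_sub_two_ne_zero_iff hx.2.1 (by omega) (by omega)).mp hx.2.2

theorem chainRep_mem_subregularMeetNilradical {m : ℕ} {t : k}
    (hm : m = i - 1 ∨ m = i ∧ t = 0) :
    chainRep n m t ∈ subregularMeetNilradical n i := by
  have hgap : (chainRep n m t).superdiag (i - 1) = 0 := by
    rw [superdiag_chainRep (by omega)]
    rcases hm with rfl | ⟨rfl, rfl⟩ <;> split_ifs <;> first | rfl | omega
  have hone (c : ℕ) (hc : c + 2 < i ∨ i < c) (hcn : c + 1 < n) :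
      (chainRep n m t).superdiag c = 1 := by
    rw [superdiag_chainRep hcn]
    split_ifs <;> first | rfl | omega
  refine ⟨isStrictUpperTri_chainRep, hgap, ?_⟩
  rw [isStrictUpperTri_chainRep.pow_sub_two_ne_zero_iff hgap (by omega) (by omega),
    isStrictUpperTri_chainRep.corner_eq_prod_mul_sq_mul hgap (by omega) (by omega),
    prod_eq_one fun c hc => by have := mem_range.mp hc; exact hone c (by omega) (by omega),
    prod_eq_one fun c hc => by have := mem_range.mp hc; exact hone _ (by omega) (by omega),
    show i - 1 - 1 = i - 2 by omega, show i - 1 + 2 = i - 2 + 3 by omega,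
    isStrictUpperTri_chainRep.natEntry_sq (by omega), natEntry_chainRep_add_two (by omega),
    natEntry_chainRep_add_two (by omega), superdiag_chainRep (by omega),
    superdiag_chainRep (by omega)]
  rcases hm with rfl | ⟨rfl, rfl⟩ <;> split_ifs <;> first | omega | simp

end subregularMeetNilradical

section pieces

variable {i : ℕ} (hi1 : 2 ≤ i) (hi2 : i + 2 ≤ n)
include hi1 hi2

theorem sep_superdiag_pred_eq_zero_eq_Borbit [IsAlgClosed k] :
    {x ∈ subregularMeetNilradical n i | x.superdiag (i - 2) = 0} =
      Borbit (chainRep n (i - 1) (0 : k)) := by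
  ext y
  refine ⟨fun ⟨hy, hpred⟩ => ?_, fun hy => ?_⟩
  · exact mem_Borbit_chainRep_zero hy.1 (by omega) hy.2.1
      (natEntry_pow_sub_two_ne_zero_of_mem hi1 hi2 hy) (by omega)
      (by rwa [show i - 1 - 1 = i - 2 by omega])
  · refine ⟨mem_subregularMeetNilradical_of_mem_Borbit
      (chainRep_mem_subregularMeetNilradical hi1 hi2 (.inl rfl)) hy, ?_⟩
    rw [superdiag_eq_zero_iff_of_mem_Borbit hy isStrictUpperTri_chainRep,
      superdiag_chainRep (by omega), if_neg (by omega), if_pos (by omega)]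

theorem sep_superdiag_succ_eq_zero_eq_Borbit [IsAlgClosed k] :
    {x ∈ subregularMeetNilradical n i | x.superdiag i = 0} = Borbit (chainRep n i (0 : k)) := by
  ext y
  refine ⟨fun ⟨hy, hsucc⟩ => ?_, fun hy => ?_⟩
  · exact mem_Borbit_chainRep_zero hy.1 (by omega) hsucc
      (natEntry_pow_sub_two_ne_zero_of_mem hi1 hi2 hy) hi2 hy.2.1
  · refine ⟨mem_subregularMeetNilradical_of_mem_Borbit
      (chainRep_mem_subregularMeetNilradical hi1 hi2 (.inr ⟨rfl, rfl⟩)) hy, ?_⟩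
    rw [superdiag_eq_zero_iff_of_mem_Borbit hy isStrictUpperTri_chainRep,
      superdiag_chainRep (by omega), if_pos rfl]

theorem sep_superdiag_ne_zero_eq_Borbit [IsAlgClosed k] :
    {x ∈ subregularMeetNilradical n i | x.superdiag (i - 2) ≠ 0 ∧ x.superdiag i ≠ 0} =
      Borbit (chainRep n (i - 1) (1 : k)) := by
  ext y
  refine ⟨fun ⟨hy, hpred, hsucc⟩ => ?_, fun hy => ?_⟩
  · exact mem_Borbit_chainRep_one hy.1 (by omega) hy.2.1
      (natEntry_pow_sub_two_ne_zero_of_mem hi1 hi2 hy) (by omega)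
      (by rwa [show i - 1 - 1 = i - 2 by omega]) (by rwa [show i - 1 + 1 = i by omega])
  · refine ⟨mem_subregularMeetNilradical_of_mem_Borbit
      (chainRep_mem_subregularMeetNilradical hi1 hi2 (.inl rfl)) hy, ?_, ?_⟩
    all_goals
      rw [Ne, superdiag_eq_zero_iff_of_mem_Borbit hy isStrictUpperTri_chainRep,
        superdiag_chainRep (by omega)]
      split_ifs <;> first | omega | simp

/-- Three consecutive zeros on the superdiagonal would kill the corner of `x ^ (n - 2)`. -/
theorem sep_superdiag_pred_eq_zero_inter_sep_superdiag_succ_eq_zero :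
    {x ∈ subregularMeetNilradical n i | x.superdiag (i - 2) = 0} ∩
      {x ∈ subregularMeetNilradical n i | x.superdiag i = 0} =
        (∅ : Set (Matrix (Fin n) (Fin n) k)) := by
  refine Set.eq_empty_iff_forall_notMem.mpr fun y ⟨⟨hy, hpred⟩, _, hsucc⟩ => ?_
  exact hy.1.superdiag_ne_zero_of_lt_gap hsucc (natEntry_pow_sub_two_ne_zero_of_mem hi1 hi2 hy) hi2
    (show i - 2 + 1 < i by omega) hpred

end pieces

end

/-- Let `n ≥ 4`, `2 ≤ i ≤ n-2`, and let `S` be the set of strictly upper triangular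
matrices `x` with `x_{i,i+1} = 0` and `x^(n-2) ≠ 0`, i.e. the intersection of the
subregular nilpotent orbit with the nilradical `u_{α_i}`.  Then `S` is the union of exactly
three `B`-orbits: the subset where `x_{i-1,i} = 0` is one orbit, the subset where
`x_{i+1,i+2} = 0` is another, these two subsets are disjoint, and the subset where both
`x_{i-1,i} ≠ 0` and `x_{i+1,i+2} ≠ 0` is a single (dense) orbit. -/
theorem three_Borbits_in_subregular_meet_u_alphai {k : Type*} [Field k] [IsAlgClosed k]
    {n i : ℕ} (hi1 : 2 ≤ i) (hi2 : i ≤ n - 2)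
    (S : Set (Matrix (Fin n) (Fin n) k))
    (hS : S = { x | IsStrictUpperTri x ∧ x ⟨i - 1, by omega⟩ ⟨i, by omega⟩ = 0 ∧
      x ^ (n - 2) ≠ 0 }) :
    (∃ e₁ : Matrix (Fin n) (Fin n) k,
      { x ∈ S | x ⟨i - 2, by omega⟩ ⟨i - 1, by omega⟩ = 0 } = Borbit e₁) ∧
    (∃ e₂ : Matrix (Fin n) (Fin n) k,
      { x ∈ S | x ⟨i, by omega⟩ ⟨i + 1, by omega⟩ = 0 } = Borbit e₂) ∧
    { x ∈ S | x ⟨i - 2, by omega⟩ ⟨i - 1, by omega⟩ = 0 } ∩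
      { x ∈ S | x ⟨i, by omega⟩ ⟨i + 1, by omega⟩ = 0 } = ∅ ∧
    (∃ e₃ : Matrix (Fin n) (Fin n) k,
      { x ∈ S | x ⟨i - 2, by omega⟩ ⟨i - 1, by omega⟩ ≠ 0 ∧
        x ⟨i, by omega⟩ ⟨i + 1, by omega⟩ ≠ 0 } = Borbit e₃) := by
  have hin : i + 2 ≤ n := by omega
  have hgap : i = i - 1 + 1 := by omega
  have hpred : i - 1 = i - 2 + 1 := by omega
  subst hS
  simp only [apply_mk_eq_superdiag (hab := hgap), apply_mk_eq_superdiag (hab := hpred),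
    apply_mk_eq_superdiag (b := i + 1) (hab := rfl)]
  exact ⟨⟨_, sep_superdiag_pred_eq_zero_eq_Borbit hi1 hin⟩,
    ⟨_, sep_superdiag_succ_eq_zero_eq_Borbit hi1 hin⟩,
    sep_superdiag_pred_eq_zero_inter_sep_superdiag_succ_eq_zero hi1 hin,
    ⟨_, sep_superdiag_ne_zero_eq_Borbit hi1 hin⟩⟩
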